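/- If H(M_1|Y_1^N) ≤ Nε, N R_1 - H(M_1|Y_2^N) ≤ Nε, and H(M_1) = N R_1, then N R_1 ≤ Σ_{n=1}^N [ I(M_1 ; Y_{1,n} | U_n) - I(M_1 ; Y_{2,n} | U_n) + H(W_n | U_n, M_1) ] + 2Nε, where U_n = (Y_{1,n+1}^N, Y_2^{n-1}). -/

import Mathlib

open scoped BigOperators

/-- A probability mass function on a finite sample space. -/
def IsPMF {Ω : Type} [Fintype Ω] (p : Ω → ℝ) : Prop :=
  (∀ ω, 0 ≤ p ω) ∧ ∑ ω, p ω = 1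

/-- Probability that the discrete random variable `X` takes the value `x`. -/
noncomputable def pm {Ω : Type} [Fintype Ω] (p : Ω → ℝ) {α : Type} [DecidableEq α]
    (X : Ω → α) (x : α) : ℝ :=
  ∑ ω, if X ω = x then p ω else 0

/-- Shannon entropy (base 2) of a discrete random variable `X`. -/
noncomputable def ent {Ω : Type} [Fintype Ω] (p : Ω → ℝ) {α : Type} [Fintype α] [DecidableEq α]
    (X : Ω → α) : ℝ :=
  -∑ x, pm p X x * Real.logb 2 (pm p X x)

/-- Conditional Shannon entropy `H(X | Y)`. -/
noncomputable def cent {Ω : Type} [Fintype Ω] (p : Ω → ℝ) {α β : Type}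
    [Fintype α] [DecidableEq α] [Fintype β] [DecidableEq β]
    (X : Ω → α) (Y : Ω → β) : ℝ :=
  ent p (fun ω => (X ω, Y ω)) - ent p Y

/-- Mutual information `I(X ; Y)`. -/
noncomputable def mi {Ω : Type} [Fintype Ω] (p : Ω → ℝ) {α β : Type}
    [Fintype α] [DecidableEq α] [Fintype β] [DecidableEq β]
    (X : Ω → α) (Y : Ω → β) : ℝ :=
  ent p X - cent p X Y

/-- Conditional mutual information `I(X ; Y | Z) = H(X|Z) - H(X|Z,Y)`. -/
noncomputable def cmi {Ω : Type} [Fintype Ω] (p : Ω → ℝ) {α β γ : Type}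
    [Fintype α] [DecidableEq α] [Fintype β] [DecidableEq β] [Fintype γ] [DecidableEq γ]
    (X : Ω → α) (Y : Ω → β) (Z : Ω → γ) : ℝ :=
  cent p X Z - cent p X (fun ω => (Z ω, Y ω))

/-- Independence of two discrete random variables. -/
def IndepRV {Ω : Type} [Fintype Ω] (p : Ω → ℝ) {α β : Type} [DecidableEq α] [DecidableEq β]
    (X : Ω → α) (Y : Ω → β) : Prop :=
  ∀ x y, pm p (fun ω => (X ω, Y ω)) (x, y) = pm p X x * pm p Y y

/-- The strict prefix `(Y_1, …, Y_{n-1})` of a sequence of random variables. -/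
def pfx {Ω : Type} {N : ℕ} {α : Type} (Y : Fin N → Ω → α) (n : Fin N) :
    Ω → ({i : Fin N // i < n} → α) :=
  fun ω i => Y i.1 ω

/-- The strict suffix `(Y_{n+1}, …, Y_N)` of a sequence of random variables. -/
def sfx {Ω : Type} {N : ℕ} {α : Type} (Y : Fin N → Ω → α) (n : Fin N) :
    Ω → ({i : Fin N // n < i} → α) :=
  fun ω i => Y i.1 ω

/-!
Replace the coordinates of `Y₁^N` by those of `Y₂^N` one at a time. Exchanging coordinate `n`
changes `H(M₁ | ·)` by exactly `I(M₁; Y_{1,n} | U_n) - I(M₁; Y_{2,n} | U_n)`, since the two hybrid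
vectors are `(U_n, Y_{1,n})` and `(U_n, Y_{2,n})` up to relabelling. The sum therefore telescopes
to `H(M₁ | Y₂^N) - H(M₁ | Y₁^N)` (Csiszár's sum identity), which is at least `N R₁ - 2Nε` by the
secrecy and Fano bounds; the terms `H(W_n | U_n, M₁)` are nonnegative.
-/

section Entropy

variable {Ω : Type} [Fintype Ω] (p : Ω → ℝ)

lemma pm_nonneg (hp : ∀ ω, 0 ≤ p ω) {β : Type} [DecidableEq β] (X : Ω → β) (x : β) :
    0 ≤ pm p X x :=
  Finset.sum_nonneg fun ω _ => by split_ifs <;> simp [hp ω]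

lemma pm_comp_of_injective {β γ : Type} [DecidableEq β] [DecidableEq γ]
    (X : Ω → β) {g : β → γ} (hg : Function.Injective g) (x : β) :
    pm p (fun ω => g (X ω)) (g x) = pm p X x := by
  simp only [pm, hg.eq_iff]

lemma pm_comp_eq_zero_of_notMem_range {β γ : Type} [DecidableEq β] [DecidableEq γ]
    (X : Ω → β) (g : β → γ) {y : γ} (hy : y ∉ Set.range g) :
    pm p (fun ω => g (X ω)) y = 0 :=
  Finset.sum_eq_zero fun ω _ => if_neg fun h => hy ⟨X ω, h⟩

lemma ent_comp_of_injective {β γ : Type} [Fintype β] [DecidableEq β] [Fintype γ]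
    [DecidableEq γ] (X : Ω → β) {g : β → γ} (hg : Function.Injective g) :
    ent p (fun ω => g (X ω)) = ent p X := by
  unfold ent
  congr 1
  exact (Fintype.sum_of_injective g hg _ _
    (fun y hy => by simp [pm_comp_eq_zero_of_notMem_range p X g hy])
    (fun x => by rw [pm_comp_of_injective p X hg])).symm

lemma cent_comp_of_injective {β γ δ : Type} [Fintype β] [DecidableEq β] [Fintype γ]
    [DecidableEq γ] [Fintype δ] [DecidableEq δ] (X : Ω → β) (Z : Ω → γ) {g : γ → δ}
    (hg : Function.Injective g) :
    cent p X (fun ω => g (Z ω)) = cent p X Z := by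
  unfold cent
  rw [ent_comp_of_injective p Z hg,
    ← ent_comp_of_injective p (fun ω => (X ω, Z ω)) (Function.injective_id.prodMap hg)]
  rfl

lemma pm_eq_sum_pm_prod {β γ : Type} [Fintype β] [DecidableEq β] [DecidableEq γ]
    (X : Ω → β) (Z : Ω → γ) (z : γ) :
    pm p Z z = ∑ x : β, pm p (fun ω => (X ω, Z ω)) (x, z) := by
  unfold pm
  rw [Finset.sum_comm]
  refine Finset.sum_congr rfl fun ω _ => ?_
  by_cases h : Z ω = z <;> simp [Prod.ext_iff, h]

lemma ent_le_ent_prod (hp : ∀ ω, 0 ≤ p ω) {β γ : Type} [Fintype β] [DecidableEq β]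
    [Fintype γ] [DecidableEq γ] (X : Ω → β) (Z : Ω → γ) :
    ent p Z ≤ ent p (fun ω => (X ω, Z ω)) := by
  unfold ent
  rw [neg_le_neg_iff, Fintype.sum_prod_type_right]
  refine Finset.sum_le_sum fun z _ => ?_
  rw [pm_eq_sum_pm_prod p X Z z, Finset.sum_mul]
  refine Finset.sum_le_sum fun x _ => ?_
  rcases (pm_nonneg p hp (fun ω => (X ω, Z ω)) (x, z)).eq_or_lt with h0 | h0
  · simp [← h0]
  · -- each joint probability is at most the marginal it is summed into
    exact mul_le_mul_of_nonneg_left (Real.logb_le_logb_of_le one_lt_two h0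
      (Finset.single_le_sum (f := fun x' => pm p (fun ω => (X ω, Z ω)) (x', z))
        (fun x' _ => pm_nonneg p hp _ _) (Finset.mem_univ x))) h0.le

lemma cent_nonneg (hp : ∀ ω, 0 ≤ p ω) {β γ : Type} [Fintype β] [DecidableEq β]
    [Fintype γ] [DecidableEq γ] (X : Ω → β) (Z : Ω → γ) :
    0 ≤ cent p X Z :=
  sub_nonneg.mpr (ent_le_ent_prod p hp X Z)

end Entropy

section Hybrid

variable {Ω : Type} {N : ℕ} {α : Type}

def hybrid (Y₁ Y₂ : Fin N → Ω → α) (k : ℕ) : Ω → Fin N → α :=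
  fun ω i => if (i : ℕ) < k then Y₂ i ω else Y₁ i ω

def splitAt (n : Fin N) (f : Fin N → α) :
    (({i : Fin N // n < i} → α) × ({i : Fin N // i < n} → α)) × α :=
  ((fun i => f i, fun i => f i), f n)

lemma splitAt_injective (n : Fin N) : Function.Injective (splitAt (α := α) n) := by
  intro f f' h
  simp only [splitAt, Prod.mk.injEq, funext_iff, Subtype.forall] at h
  obtain ⟨⟨hsfx, hpfx⟩, hn⟩ := h
  funext i
  rcases lt_trichotomy i n with hi | rfl | hi
  exacts [hpfx i hi, hn, hsfx i hi]

lemma splitAt_hybrid (Y₁ Y₂ : Fin N → Ω → α) (n : Fin N) (ω : Ω) :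
    splitAt n (hybrid Y₁ Y₂ n ω) = ((sfx Y₁ n ω, pfx Y₂ n ω), Y₁ n ω) := by
  refine Prod.ext (Prod.ext (funext fun i => ?_) (funext fun i => ?_)) ?_
  · exact if_neg (Fin.lt_def.mp i.2).not_gt
  · exact if_pos (Fin.lt_def.mp i.2)
  · exact if_neg (lt_irrefl _)

lemma splitAt_hybrid_succ (Y₁ Y₂ : Fin N → Ω → α) (n : Fin N) (ω : Ω) :
    splitAt n (hybrid Y₁ Y₂ (n + 1) ω) = ((sfx Y₁ n ω, pfx Y₂ n ω), Y₂ n ω) := by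
  refine Prod.ext (Prod.ext (funext fun i => ?_) (funext fun i => ?_)) ?_
  · exact if_neg (by have := Fin.lt_def.mp i.2; omega)
  · exact if_pos (by have := Fin.lt_def.mp i.2; omega)
  · exact if_pos (Nat.lt_succ_self _)

variable [Fintype Ω] (p : Ω → ℝ) {μ : Type} [Fintype μ] [DecidableEq μ] [Fintype α]
  [DecidableEq α] (M : Ω → μ) (Y₁ Y₂ : Fin N → Ω → α)

lemma cmi_sub_cmi_eq_cent_hybrid_sub (n : Fin N) :
    cmi p M (Y₁ n) (fun ω => (sfx Y₁ n ω, pfx Y₂ n ω)) -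
        cmi p M (Y₂ n) (fun ω => (sfx Y₁ n ω, pfx Y₂ n ω)) =
      cent p M (hybrid Y₁ Y₂ (n + 1)) - cent p M (hybrid Y₁ Y₂ n) := by
  rw [← cent_comp_of_injective p M (hybrid Y₁ Y₂ (n + 1)) (splitAt_injective n),
    ← cent_comp_of_injective p M (hybrid Y₁ Y₂ n) (splitAt_injective n)]
  simp only [splitAt_hybrid, splitAt_hybrid_succ, cmi]
  ring

theorem sum_cmi_sub_cmi_eq_cent_sub_cent :
    ∑ n : Fin N, (cmi p M (Y₁ n) (fun ω => (sfx Y₁ n ω, pfx Y₂ n ω)) -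
        cmi p M (Y₂ n) (fun ω => (sfx Y₁ n ω, pfx Y₂ n ω))) =
      cent p M (fun ω i => Y₂ i ω) - cent p M (fun ω i => Y₁ i ω) := by
  simp only [cmi_sub_cmi_eq_cent_hybrid_sub]
  rw [Fin.sum_univ_eq_sum_range (fun k => cent p M (hybrid Y₁ Y₂ (k + 1)) -
    cent p M (hybrid Y₁ Y₂ k)) N, Finset.sum_range_sub (fun k => cent p M (hybrid Y₁ Y₂ k))]
  have hybrid_zero : hybrid Y₁ Y₂ 0 = fun ω i => Y₁ i ω := by
    funext ω i
    exact if_neg (Nat.not_lt_zero _)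
  have hybrid_length : hybrid Y₁ Y₂ N = fun ω i => Y₂ i ω := by
    funext ω i
    exact if_pos i.isLt
  rw [hybrid_zero, hybrid_length]

end Hybrid

theorem classII_single_rate_converse_general {Ω : Type} [Fintype Ω] {N : ℕ} {μ α σ : Type}
    [Fintype μ] [DecidableEq μ] [Fintype α] [DecidableEq α] [Fintype σ] [DecidableEq σ]
    (p : Ω → ℝ) (hp : IsPMF p) (M₁ : Ω → μ) (Y₁ Y₂ : Fin N → Ω → α) (W : Fin N → Ω → σ)
    (R₁ ε : ℝ)
    (hfano : cent p M₁ (fun ω => (fun i : Fin N => Y₁ i ω)) ≤ (N : ℝ) * ε)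
    (hsecrecy : (N : ℝ) * R₁ - cent p M₁ (fun ω => (fun i : Fin N => Y₂ i ω)) ≤ (N : ℝ) * ε) :
    (N : ℝ) * R₁ ≤
      (∑ n : Fin N,
        (cmi p M₁ (Y₁ n) (fun ω => (sfx Y₁ n ω, pfx Y₂ n ω)) -
         cmi p M₁ (Y₂ n) (fun ω => (sfx Y₁ n ω, pfx Y₂ n ω)) +
         cent p (W n) (fun ω => ((sfx Y₁ n ω, pfx Y₂ n ω), M₁ ω)))) +
      2 * (N : ℝ) * ε := by
  have hcsiszar := sum_cmi_sub_cmi_eq_cent_sub_cent p M₁ Y₁ Y₂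
  have hstate : 0 ≤ ∑ n : Fin N, cent p (W n) (fun ω => ((sfx Y₁ n ω, pfx Y₂ n ω), M₁ ω)) :=
    Finset.sum_nonneg fun n _ => cent_nonneg p hp.1 _ _
  rw [Finset.sum_add_distrib]
  linarith

theorem classII_single_rate_converse {Ω : Type} [Fintype Ω] {N : ℕ} {μ α σ : Type}
    [Fintype μ] [DecidableEq μ] [Fintype α] [DecidableEq α] [Fintype σ] [DecidableEq σ]
    (p : Ω → ℝ) (hp : IsPMF p) (M₁ : Ω → μ) (Y₁ Y₂ : Fin N → Ω → α) (W : Fin N → Ω → σ)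
    (R₁ ε : ℝ)
    (hent : ent p M₁ = (N : ℝ) * R₁)
    (hfano : cent p M₁ (fun ω => (fun i : Fin N => Y₁ i ω)) ≤ (N : ℝ) * ε)
    (hsecrecy : (N : ℝ) * R₁ - cent p M₁ (fun ω => (fun i : Fin N => Y₂ i ω)) ≤ (N : ℝ) * ε) :
    (N : ℝ) * R₁ ≤
      (∑ n : Fin N,
        (cmi p M₁ (Y₁ n) (fun ω => (sfx Y₁ n ω, pfx Y₂ n ω)) -
         cmi p M₁ (Y₂ n) (fun ω => (sfx Y₁ n ω, pfx Y₂ n ω)) +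
         cent p (W n) (fun ω => ((sfx Y₁ n ω, pfx Y₂ n ω), M₁ ω)))) +
      2 * (N : ℝ) * ε :=
  classII_single_rate_converse_general p hp M₁ Y₁ Y₂ W R₁ ε hfano hsecrecy
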